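/- arXiv:0910.5664 — 5 statements merged into one kernel-verified Lean document; each statement's English description precedes it below -/
import Mathlib

section
/- Let A be a commutative ring, n a positive integer, u ∈ A[t], and set f(t) = u(t+n) - u(t). In the Smith algebra S(A, f, n), the element Ω = xy - u(e) is central: it commutes with x, y, and e. -/
open Polynomial

/-- Defining relations of the Smith algebra `S(A, f, n)`: generators `x = ι 0`,
`y = ι 1`, `e = ι 2` with `[e,x] = nx`, `[e,y] = -ny`, `[y,x] = f(e)`. -/
inductive SmithRel (A : Type*) [CommRing A] (f : Polynomial A) (n : ℕ) :
    FreeAlgebra A (Fin 3) → FreeAlgebra A (Fin 3) → Prop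
  | ex : SmithRel A f n (FreeAlgebra.ι A 2 * FreeAlgebra.ι A 0)
      (FreeAlgebra.ι A 0 * FreeAlgebra.ι A 2 + n • FreeAlgebra.ι A 0)
  | ey : SmithRel A f n (FreeAlgebra.ι A 2 * FreeAlgebra.ι A 1)
      (FreeAlgebra.ι A 1 * FreeAlgebra.ι A 2 - n • FreeAlgebra.ι A 1)
  | yx : SmithRel A f n (FreeAlgebra.ι A 1 * FreeAlgebra.ι A 0)
      (FreeAlgebra.ι A 0 * FreeAlgebra.ι A 1 +
        f.eval₂ (algebraMap A (FreeAlgebra A (Fin 3))) (FreeAlgebra.ι A 2))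

/-- The Smith algebra `S(A, f, n)`. -/
abbrev SmithAlgebra (A : Type*) [CommRing A] (f : Polynomial A) (n : ℕ) :=
  RingQuot (SmithRel A f n)

/-- The generator `x` of the Smith algebra. -/
noncomputable def Smith.x (A : Type*) [CommRing A] (f : Polynomial A) (n : ℕ) :
    SmithAlgebra A f n := RingQuot.mkAlgHom A (SmithRel A f n) (FreeAlgebra.ι A 0)

/-- The generator `y` of the Smith algebra. -/
noncomputable def Smith.y (A : Type*) [CommRing A] (f : Polynomial A) (n : ℕ) :
    SmithAlgebra A f n := RingQuot.mkAlgHom A (SmithRel A f n) (FreeAlgebra.ι A 1)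

/-- The generator `e` of the Smith algebra. -/
noncomputable def Smith.e (A : Type*) [CommRing A] (f : Polynomial A) (n : ℕ) :
    SmithAlgebra A f n := RingQuot.mkAlgHom A (SmithRel A f n) (FreeAlgebra.ι A 2)

/-!
`e x = x (e + n)` and `y e = (e + n) y` say that `x` and `y` shift the argument of any polynomial
in `e` by `n`, in opposite directions. So `x u(e + n) = u(e) x` and `y u(e) = u(e + n) y`, and the
relation `y x = x y + u(e + n) - u(e)` is exactly what makes `x y - u(e)` commute with `x` and `y`;
it commutes with `e` because `x y` does.
-/

theorem SemiconjBy.aeval {R S : Type*} [CommSemiring R] [Semiring S] [Algebra R S] {x a b : S}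
    (h : SemiconjBy x a b) (p : R[X]) : SemiconjBy x (aeval a p) (aeval b p) := by
  induction p using Polynomial.induction_on' with
  | add p q hp hq => simpa only [map_add] using hp.add_right hq
  | monomial k r =>
    simpa only [aeval_monomial] using
      SemiconjBy.mul_right (Algebra.commute_algebraMap_right r x) (h.pow_right k)

section Casimir

variable {R S : Type*} [CommRing R] [Ring S] [Algebra R S] {x y e : S} {c : R} (u : R[X])

theorem commute_mul_sub_aeval_left
    (hx : SemiconjBy x (e + algebraMap R S c) e)
    (hyx : y * x = x * y + (aeval (e + algebraMap R S c) u - aeval e u)) :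
    Commute (x * y - aeval e u) x := by
  have hux : x * aeval (e + algebraMap R S c) u = aeval e u * x := hx.aeval u
  change _ * x = x * _
  rw [sub_mul, mul_assoc, hyx, ← hux]
  noncomm_ring

theorem commute_mul_sub_aeval_right
    (hy : SemiconjBy y e (e + algebraMap R S c))
    (hyx : y * x = x * y + (aeval (e + algebraMap R S c) u - aeval e u)) :
    Commute (x * y - aeval e u) y := by
  have huy : y * aeval e u = aeval (e + algebraMap R S c) u * y := hy.aeval u
  change _ * y = y * _
  rw [mul_sub, ← mul_assoc, hyx, huy]
  noncomm_ring

theorem commute_mul_sub_aeval_self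
    (hx : SemiconjBy x (e + algebraMap R S c) e) (hy : SemiconjBy y e (e + algebraMap R S c)) :
    Commute (x * y - aeval e u) e :=
  (hx.mul_left hy).sub_left ((Commute.refl e).aeval u).symm

end Casimir

namespace Smith

variable (A : Type*) [CommRing A] (f : A[X]) (n : ℕ)

theorem semiconjBy_x : SemiconjBy (x A f n) (e A f n + n) (e A f n) := by
  have h : e A f n * x A f n = x A f n * e A f n + n • x A f n := by
    have h := RingQuot.mkAlgHom_rel A (SmithRel.ex (f := f) (n := n))
    simp only [map_mul, map_add, map_nsmul] at h
    exact h
  change x A f n * (e A f n + n) = e A f n * x A f n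
  rw [h, mul_add, nsmul_eq_mul, (Nat.cast_commute n _).eq]

theorem semiconjBy_y : SemiconjBy (y A f n) (e A f n) (e A f n + n) := by
  have h : e A f n * y A f n = y A f n * e A f n - n • y A f n := by
    have h := RingQuot.mkAlgHom_rel A (SmithRel.ey (f := f) (n := n))
    simp only [map_mul, map_sub, map_nsmul] at h
    exact h
  change y A f n * e A f n = (e A f n + n) * y A f n
  rw [add_mul, h, nsmul_eq_mul, (Nat.cast_commute n _).eq, sub_add_cancel]

theorem y_mul_x : y A f n * x A f n = x A f n * y A f n + aeval (e A f n) f := by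
  have h := RingQuot.mkAlgHom_rel A (SmithRel.yx (f := f) (n := n))
  simp only [map_mul, map_add, ← aeval_def, ← aeval_algHom_apply] at h
  exact h

end Smith

theorem stmt7_general (A : Type*) [CommRing A] (n : ℕ) (u : Polynomial A) :
    let f := u.comp (X + C (n : A)) - u
    let x := Smith.x A f n
    let y := Smith.y A f n
    let e := Smith.e A f n
    let Ω := x * y - u.eval₂ (algebraMap A (SmithAlgebra A f n)) e
    Ω * x = x * Ω ∧ Ω * y = y * Ω ∧ Ω * e = e * Ω := by
  intro f x y e Ω
  have hcast : algebraMap A (SmithAlgebra A f n) (n : A) = n := map_natCast _ n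
  have hx := Smith.semiconjBy_x A f n
  have hy := Smith.semiconjBy_y A f n
  have hyx : y * x = x * y + (aeval (e + algebraMap A _ (n : A)) u - aeval e u) := by
    rw [Smith.y_mul_x, map_sub, aeval_comp, map_add, aeval_X, aeval_C]
  rw [← hcast] at hx hy
  exact ⟨(commute_mul_sub_aeval_left u hx hyx).eq, (commute_mul_sub_aeval_right u hy hyx).eq,
    (commute_mul_sub_aeval_self u hx hy).eq⟩

/-- If `f(t) = u(t+n) - u(t)`, then `Ω = xy - u(e)` is central in `S(A, f, n)`:
it commutes with `x`, `y` and `e`. -/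
theorem stmt7 (A : Type*) [CommRing A] (n : ℕ) (hn : 0 < n) (u : Polynomial A) :
    let f := u.comp (X + C (n : A)) - u
    let x := Smith.x A f n
    let y := Smith.y A f n
    let e := Smith.e A f n
    let Ω := x * y - u.eval₂ (algebraMap A (SmithAlgebra A f n)) e
    Ω * x = x * Ω ∧ Ω * y = y * Ω ∧ Ω * e = e * Ω :=
  stmt7_general A n u
end

section
/- Let A be a commutative ring without zero divisors, n a positive integer, u ∈ A[t], and f(t) = u(t+n) - u(t). Then the quotient of the Smith algebra S(A, f, n) by the two-sided ideal generated by Ω = xy - u(e) is isomorphic as an A-algebra to U(A, u, n). -/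
open Polynomial

/-- Defining relations of the algebra `U(A, u, n)`: generators `x̃ = ι 0`, `ỹ = ι 1`,
`ẽ = ι 2` with `[ẽ,x̃] = nx̃`, `[ẽ,ỹ] = -nỹ`, `x̃ỹ = u(ẽ)`, `ỹx̃ = u(ẽ+n)`. -/
inductive URel (A : Type*) [CommRing A] (u : Polynomial A) (n : ℕ) :
    FreeAlgebra A (Fin 3) → FreeAlgebra A (Fin 3) → Prop
  | ex : URel A u n (FreeAlgebra.ι A 2 * FreeAlgebra.ι A 0)
      (FreeAlgebra.ι A 0 * FreeAlgebra.ι A 2 + n • FreeAlgebra.ι A 0)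
  | ey : URel A u n (FreeAlgebra.ι A 2 * FreeAlgebra.ι A 1)
      (FreeAlgebra.ι A 1 * FreeAlgebra.ι A 2 - n • FreeAlgebra.ι A 1)
  | xy : URel A u n (FreeAlgebra.ι A 0 * FreeAlgebra.ι A 1)
      (u.eval₂ (algebraMap A (FreeAlgebra A (Fin 3))) (FreeAlgebra.ι A 2))
  | yx : URel A u n (FreeAlgebra.ι A 1 * FreeAlgebra.ι A 0)
      (u.eval₂ (algebraMap A (FreeAlgebra A (Fin 3)))
        (FreeAlgebra.ι A 2 + (n : FreeAlgebra A (Fin 3))))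

/-- The algebra `U(A, u, n)`. -/
abbrev UAlgebra (A : Type*) [CommRing A] (u : Polynomial A) (n : ℕ) :=
  RingQuot (URel A u n)

/-! In `S(A, f, n)` with `f(t) = u(t+n) - u(t)`, the relation `Ω = 0`, i.e. `xy = u(e)`, turns
`yx = xy + f(e)` into `yx = u(e+n)`; conversely the relations of `U(A, u, n)` give back
`[y,x] = f(e)`. So both algebras are the quotient of the free algebra on `x, y, e` by the same
ideal, and the two lifts of the quotient maps are mutually inverse. -/

theorem AlgHom.map_eval₂_algebraMap {R S T : Type*} [CommSemiring R] [Semiring S] [Semiring T]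
    [Algebra R S] [Algebra R T] (g : S →ₐ[R] T) (p : R[X]) (s : S) :
    g (p.eval₂ (algebraMap R S) s) = aeval (g s) p := by
  rw [← aeval_def, aeval_algHom_apply]

theorem aeval_comp_X_add_natCast {R S : Type*} [CommSemiring R] [Semiring S] [Algebra R S]
    (u : R[X]) (n : ℕ) (s : S) : aeval s (u.comp (X + C (n : R))) = aeval (s + n) u := by
  simp [aeval_comp]

section Relations

variable {A B : Type*} [CommRing A] [Ring B] [Algebra A B]

theorem map_smithRel_of_map_uRel {u : A[X]} {n : ℕ} (g : FreeAlgebra A (Fin 3) →ₐ[A] B)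
    (hU : ∀ ⦃a b⦄, URel A u n a b → g a = g b) :
    ∀ ⦃a b⦄, SmithRel A (u.comp (X + C (n : A)) - u) n a b → g a = g b := by
  rintro _ _ (_ | _ | _)
  · exact hU .ex
  · exact hU .ey
  · rw [hU .yx, map_add, hU .xy, g.map_eval₂_algebraMap, g.map_eval₂_algebraMap,
      g.map_eval₂_algebraMap, map_sub, aeval_comp_X_add_natCast, map_add, map_natCast]
    abel

theorem map_uRel_of_map_smithRel {u : A[X]} {n : ℕ} (g : FreeAlgebra A (Fin 3) →ₐ[A] B)
    (hS : ∀ ⦃a b⦄, SmithRel A (u.comp (X + C (n : A)) - u) n a b → g a = g b)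
    (hxy : g (FreeAlgebra.ι A 0 * FreeAlgebra.ι A 1) = aeval (g (FreeAlgebra.ι A 2)) u) :
    ∀ ⦃a b⦄, URel A u n a b → g a = g b := by
  rintro _ _ (_ | _ | _ | _)
  · exact hS .ex
  · exact hS .ey
  · rw [hxy, g.map_eval₂_algebraMap]
  · rw [hS .yx, map_add, hxy, g.map_eval₂_algebraMap, g.map_eval₂_algebraMap, map_sub,
      aeval_comp_X_add_natCast, map_add, map_natCast]
    abel

end Relations

theorem stmt8_general (A : Type*) [CommRing A] (n : ℕ)
    (u : Polynomial A) :
    let f := u.comp (X + C (n : A)) - u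
    let x := RingQuot.mkAlgHom A (SmithRel A f n) (FreeAlgebra.ι A 0)
    let y := RingQuot.mkAlgHom A (SmithRel A f n) (FreeAlgebra.ι A 1)
    let e := RingQuot.mkAlgHom A (SmithRel A f n) (FreeAlgebra.ι A 2)
    let Ω := x * y - u.eval₂ (algebraMap A (SmithAlgebra A f n)) e
    Nonempty
      (RingQuot (fun a b : SmithAlgebra A f n => a = Ω ∧ b = 0) ≃ₐ[A] UAlgebra A u n) := by
  intro f x y e Ω
  let Q := RingQuot fun a b : SmithAlgebra A f n => a = Ω ∧ b = 0
  let mkS := RingQuot.mkAlgHom A (SmithRel A f n)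
  let mkΩ := RingQuot.mkAlgHom A fun a b : SmithAlgebra A f n => a = Ω ∧ b = 0
  let mkU := RingQuot.mkAlgHom A (URel A u n)
  let φ : SmithAlgebra A f n →ₐ[A] UAlgebra A u n :=
    RingQuot.liftAlgHom A
      ⟨mkU, map_smithRel_of_map_uRel mkU fun _ _ h ↦ RingQuot.mkAlgHom_rel A h⟩
  have hφΩ : φ Ω = 0 := by
    simp only [Ω, x, y, e, map_sub, map_mul, φ.map_eval₂_algebraMap, φ,
      RingQuot.liftAlgHom_mkAlgHom_apply]
    rw [← map_mul, RingQuot.mkAlgHom_rel A URel.xy, mkU.map_eval₂_algebraMap, sub_self]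
  let F : Q →ₐ[A] UAlgebra A u n :=
    RingQuot.liftAlgHom A ⟨φ, by rintro _ _ ⟨rfl, rfl⟩; rw [hφΩ, map_zero]⟩
  have hxy : mkΩ.comp mkS (FreeAlgebra.ι A 0 * FreeAlgebra.ι A 1)
      = aeval (mkΩ.comp mkS (FreeAlgebra.ι A 2)) u := by
    have hS : mkS (FreeAlgebra.ι A 0 * FreeAlgebra.ι A 1)
        = Ω + u.eval₂ (algebraMap A (SmithAlgebra A f n)) e := by
      rw [sub_add_cancel, map_mul]
    rw [AlgHom.comp_apply, hS, map_add, RingQuot.mkAlgHom_rel A ⟨rfl, rfl⟩, map_zero, zero_add,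
      mkΩ.map_eval₂_algebraMap]
    rfl
  have hG : ∀ ⦃a b⦄, URel A u n a b → mkΩ.comp mkS a = mkΩ.comp mkS b :=
    map_uRel_of_map_smithRel (A := A) (B := Q) (mkΩ.comp mkS) (fun _ _ h ↦ by
      rw [AlgHom.comp_apply, AlgHom.comp_apply, RingQuot.mkAlgHom_rel A h]) hxy
  let G : UAlgebra A u n →ₐ[A] Q := RingQuot.liftAlgHom A ⟨mkΩ.comp mkS, hG⟩
  refine ⟨AlgEquiv.ofAlgHom F G ?_ ?_⟩
  · ext i
    simp [F, G, φ, mkS, mkΩ, mkU]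
  · ext i
    simp [F, G, φ, mkS, mkΩ, mkU]

/-- With `f(t) = u(t+n) - u(t)`, the quotient of the Smith algebra `S(A, f, n)` by the
two-sided ideal generated by `Ω = xy - u(e)` is isomorphic to `U(A, u, n)` as an
`A`-algebra. -/
theorem stmt8 (A : Type*) [CommRing A] [IsDomain A] (n : ℕ) (hn : 0 < n)
    (u : Polynomial A) :
    let f := u.comp (X + C (n : A)) - u
    let x := RingQuot.mkAlgHom A (SmithRel A f n) (FreeAlgebra.ι A 0)
    let y := RingQuot.mkAlgHom A (SmithRel A f n) (FreeAlgebra.ι A 1)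
    let e := RingQuot.mkAlgHom A (SmithRel A f n) (FreeAlgebra.ι A 2)
    let Ω := x * y - u.eval₂ (algebraMap A (SmithAlgebra A f n)) e
    Nonempty
      (RingQuot (fun a b : SmithAlgebra A f n => a = Ω ∧ b = 0) ≃ₐ[A] UAlgebra A u n) :=
  stmt8_general A n u
end

section
/- Let R be a commutative domain containing ℚ, and let τ be a ring automorphism of R such that there exists t ∈ R with τ(t) = t + 1. Then the center of the skew Laurent polynomial ring R[X, X⁻¹; τ] equals the fixed subring R^τ = {a ∈ R : τ(a) = a}. -/
/-!
Write an element of `R[X, X⁻¹; τ]` as `z = ∑ₚ cₚ Xᵖ`. Since `Xᵖ t = (t + p) Xᵖ`, the commutator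
`z t - t z` equals `∑ₚ p cₚ Xᵖ`; so if `z` is central then `p cₚ = 0` for all `p`, and as `R` is a
domain of characteristic zero, `z = c₀ ∈ R`. Commuting with `X` then forces `τ c₀ = c₀`.
Conversely an element of `R^τ` commutes with `R` and with `X`, hence with everything.
-/

open Finsupp

theorem RingEquiv.zpow_apply_of_apply_eq_add_one {R : Type*} [Ring R] {τ : R ≃+* R} {t : R}
    (ht : τ t = t + 1) (p : ℤ) : (τ ^ p) t = t + p := by
  have step : ∀ q : ℤ, (τ ^ (q + 1)) t = (τ ^ q) t + 1 := fun q => by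
    rw [zpow_add_one, RingAut.mul_apply, ht, map_add, map_one]
  induction p using Int.induction_on with
  | zero => simp
  | succ n ih =>
    rw [step, ih]
    push_cast
    abel
  | pred n ih =>
    have h := step (-(n : ℤ) - 1)
    rw [sub_add_cancel, ih] at h
    rw [eq_sub_of_add_eq h.symm]
    push_cast
    abel

theorem RingEquiv.zpow_apply_eq_self {R : Type*} [Semiring R] {τ : R ≃+* R} {a : R}
    (ha : τ a = a) (p : ℤ) : (τ ^ p) a = a :=
  MulAction.mem_stabilizer_iff.mp
    (Subgroup.zpow_mem (MulAction.stabilizer (RingAut R) a) (MulAction.mem_stabilizer_iff.mpr ha) p)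

section Semiring

variable {R T : Type*} [Semiring R] [Semiring T] (φ : R →+* T) (X : Tˣ)

def laurentSum (c : ℤ →₀ R) : T := c.sum fun p a => φ a * ((X ^ p : Tˣ) : T)

theorem laurentSum_single (p : ℤ) (a : R) :
    laurentSum φ X (single p a) = φ a * ((X ^ p : Tˣ) : T) := by
  simp [laurentSum]

theorem map_mul_laurentSum (r : R) (c : ℤ →₀ R) :
    φ r * laurentSum φ X c = laurentSum φ X (r • c) := by
  simp only [laurentSum, Finsupp.mul_sum, ← mul_assoc, ← map_mul]
  rw [sum_smul_index fun p => by rw [map_zero, zero_mul]]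

variable {φ X}

theorem units_zpow_mul_map {τ : R ≃+* R} (hX : ∀ a : R, (X : T) * φ a = φ (τ a) * X)
    (p : ℤ) (a : R) : ((X ^ p : Tˣ) : T) * φ a = φ ((τ ^ p) a) * ((X ^ p : Tˣ) : T) := by
  induction p using Int.induction_on generalizing a with
  | zero => simp
  | succ n ih =>
    rw [zpow_add_one, zpow_add_one, Units.val_mul, mul_assoc, hX, ← mul_assoc, ih, mul_assoc,
      RingAut.mul_apply]
  | pred n ih =>
    have hXinv : ((X⁻¹ : Tˣ) : T) * φ a = φ (τ.symm a) * ((X⁻¹ : Tˣ) : T) :=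
      SemiconjBy.units_inv_symm_left
        (by simpa using hX (τ.symm a) : (X : T) * φ (τ.symm a) = φ a * X)
    rw [zpow_sub_one, zpow_sub_one, Units.val_mul, mul_assoc, hXinv, ← mul_assoc, ih, mul_assoc,
      RingAut.mul_apply, RingAut.inv_apply]

end Semiring

section CommSemiring

variable {R T : Type*} [CommSemiring R] [Semiring T] {φ : R →+* T} {X : Tˣ}

-- `•` is the pointwise action of functions `ℤ → R` on `ℤ →₀ R`.
theorem laurentSum_mul_map {τ : R ≃+* R} (hX : ∀ a : R, (X : T) * φ a = φ (τ a) * X)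
    (c : ℤ →₀ R) (r : R) :
    laurentSum φ X c * φ r = laurentSum φ X ((fun p : ℤ => (τ ^ p) r) • c) := by
  have hsupp : ((fun p : ℤ => (τ ^ p) r) • c).support ⊆ c.support := fun p hp => by
    rw [mem_support_iff] at hp ⊢
    exact right_ne_zero_of_mul hp
  rw [laurentSum, laurentSum, sum_of_support_subset _ hsupp _ fun p _ => by simp, Finsupp.sum,
    Finset.sum_mul]
  refine Finset.sum_congr rfl fun p _ => ?_
  rw [mul_assoc, units_zpow_mul_map hX, ← mul_assoc, ← map_mul, coe_pointwise_smul, Pi.smul_apply',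
    smul_eq_mul, mul_comm]

theorem map_mem_center_of_apply_eq_self (hsurj : Function.Surjective (laurentSum φ X))
    {τ : R ≃+* R} (hX : ∀ a : R, (X : T) * φ a = φ (τ a) * X) {a : R} (ha : τ a = a) :
    φ a ∈ Set.center T := by
  refine Semigroup.mem_center_iff.mpr fun z => ?_
  obtain ⟨c, rfl⟩ := hsurj z
  rw [laurentSum_mul_map hX, map_mul_laurentSum]
  congr 1
  ext p
  simp [RingEquiv.zpow_apply_eq_self ha]

end CommSemiring

theorem laurentSum_eq_map_of_commute {R T : Type*} [CommRing R] [NoZeroDivisors R] [CharZero R]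
    [Semiring T] {φ : R →+* T} {X : Tˣ} (hinj : Function.Injective (laurentSum φ X)) {τ : R ≃+* R}
    (hX : ∀ a : R, (X : T) * φ a = φ (τ a) * X) {t : R} (ht : τ t = t + 1) {c : ℤ →₀ R}
    (hc : Commute (φ t) (laurentSum φ X c)) : laurentSum φ X c = φ (c 0) := by
  have hcoeff : t • c = (fun p : ℤ => (τ ^ p) t) • c :=
    hinj (by rw [← map_mul_laurentSum, hc.eq, laurentSum_mul_map hX])
  have hvanish : ∀ p ≠ 0, c p = 0 := fun p hp => by
    have h := DFunLike.congr_fun hcoeff p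
    simp only [Finsupp.smul_apply, coe_pointwise_smul, Pi.smul_apply', smul_eq_mul,
      RingEquiv.zpow_apply_of_apply_eq_add_one ht] at h
    have hpc : (p : R) * c p = 0 := by linear_combination -h
    exact (mul_eq_zero.mp hpc).resolve_left (Int.cast_ne_zero.mpr hp)
  have hc0 : c = single 0 (c 0) := by
    ext p
    by_cases hp : p = 0
    · simp [hp]
    · simp [hp, hvanish p hp]
  rw [hc0, laurentSum_single]
  simp

/-- Let `R` be a commutative domain containing `ℚ` and `τ` an automorphism of `R`
moving some `t` to `t + 1`.  If `T` is a skew Laurent polynomial ring `R[X,X⁻¹;τ]`,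
i.e. `T` contains `R` via `φ`, has an invertible element `X` with `X·a = τ(a)·X`, and
is free as a left `R`-module with basis the powers of `X`, then the center of `T` is
the image of the fixed ring `R^τ`. -/
theorem stmt10 (R T : Type*) [CommRing R] [IsDomain R] [Algebra ℚ R] [Ring T]
    (τ : R ≃+* R) (t : R) (ht : τ t = t + 1)
    (φ : R →+* T) (hφ : Function.Injective φ)
    (X : Tˣ) (hX : ∀ a : R, (X : T) * φ a = φ (τ a) * X)
    (hbasis : Function.Bijective
      (fun c : ℤ →₀ R => c.sum fun p a => φ a * ((X ^ p : Tˣ) : T))) :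
    (Subring.center T : Set T) = φ '' {a : R | τ a = a} := by
  have : CharZero R := charZero_of_injective_algebraMap (algebraMap ℚ R).injective
  have hL : Function.Bijective (laurentSum φ X) := hbasis
  rw [Subring.coe_center]
  ext z
  constructor
  · intro hz
    obtain ⟨c, rfl⟩ := hL.2 z
    have hcomm := (Set.mem_center_iff.mp hz).comm
    have hconst := laurentSum_eq_map_of_commute hL.1 hX ht (hcomm (φ t)).symm
    rw [hconst] at hcomm ⊢
    refine ⟨c 0, hφ ?_, rfl⟩
    have hXc := (hcomm X).eq
    rwa [hX, Units.mul_left_inj, eq_comm] at hXc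
  · rintro ⟨a, ha, rfl⟩
    exact map_mem_center_of_apply_eq_self hL.2 hX ha
end

section
/- In the Weyl algebra A₁, the Lie subalgebra generated by x³ and ∂³ (under the commutator bracket) is infinite-dimensional over ℂ. -/
open Polynomial

attribute [local instance 100] LieRing.ofAssociativeRing

/-- Multiplication by `x` on `ℂ[x]`. -/
noncomputable def Wx : Module.End ℂ (Polynomial ℂ) := LinearMap.mulLeft ℂ (X : ℂ[X])

/-- The derivative operator `∂` on `ℂ[x]`. -/
noncomputable def Wd : Module.End ℂ (Polynomial ℂ) := Polynomial.derivative

/-!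
Realise `A₁` on `ℂ[x]`. The element `h = ⁅∂³, x³⁆` acts on `xⁿ` (`n ≥ 3`) by the scalar
`9n² + 9n + 6`, and `x³` shifts `xⁿ` to `xⁿ⁺³`. Hence for every polynomial `p`, the operator
`p(ad h)(x³)` sends `xⁿ` to `p(54n + 108) xⁿ⁺³`; it vanishes only if `p` has infinitely many
roots, i.e. `p = 0`. So the iterates `(ad h)ᵏ x³`, which all lie in the Lie algebra generated by
`x³` and `∂³`, are linearly independent.
-/

section Eigenvectors

variable {R M : Type*} [CommRing R] [AddCommGroup M] [Module R M]
  {h A : Module.End R M} {v : M} {a b : R}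

theorem ad_pow_apply_of_eigenvector (hv : h v = a • v) (hAv : h (A v) = b • A v) (k : ℕ) :
    ((LieAlgebra.ad R (Module.End R M) h ^ k) A) v = (b - a) ^ k • A v := by
  induction k with
  | zero => simp
  | succ k ih =>
    rw [pow_succ', Module.End.mul_apply, LieAlgebra.ad_apply, Ring.lie_def,
      LinearMap.sub_apply, Module.End.mul_apply, Module.End.mul_apply, ih, hv, map_smul, map_smul,
      ih, hAv, smul_smul, smul_smul, ← sub_smul, pow_succ]
    congr 1
    ring

theorem aeval_ad_apply_of_eigenvector (hv : h v = a • v) (hAv : h (A v) = b • A v) (p : R[X]) :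
    (aeval (LieAlgebra.ad R (Module.End R M) h) p A) v = p.eval (b - a) • A v := by
  induction p using Polynomial.induction_on' with
  | add p q hp hq => simp only [map_add, LinearMap.add_apply, hp, hq, eval_add, add_smul]
  | monomial k c =>
    rw [aeval_monomial, Module.End.mul_apply, Module.algebraMap_end_apply, LinearMap.smul_apply,
      ad_pow_apply_of_eigenvector hv hAv, eval_monomial, smul_smul]

end Eigenvectors

theorem LieSubalgebra.ad_pow_mem {R L : Type*} [CommRing R] [LieRing L] [LieAlgebra R L]
    (K : LieSubalgebra R L) {x y : L} (hx : x ∈ K) (hy : y ∈ K) (k : ℕ) :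
    (LieAlgebra.ad R L x ^ k) y ∈ K := by
  induction k with
  | zero => exact hy
  | succ k ih =>
    rw [pow_succ', Module.End.mul_apply, LieAlgebra.ad_apply]
    exact K.lie_mem hx ih

theorem Wx_pow_apply_X_pow (k n : ℕ) : (Wx ^ k) (X ^ n) = X ^ (n + k) := by
  induction k with
  | zero => simp
  | succ k ih =>
    rw [pow_succ', Module.End.mul_apply, ih, Wx, LinearMap.mulLeft_apply, ← pow_succ', add_assoc]

theorem Wd_pow_apply_X_pow_add (k n : ℕ) :
    (Wd ^ k) (X ^ (n + k)) = ((n + k).descFactorial k : ℂ) • X ^ n := by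
  rw [Module.End.pow_apply, Wd, iterate_derivative_X_pow_eq_smul, Nat.add_sub_cancel]

theorem lie_Wd_pow_three_Wx_pow_three_apply_X_pow {n : ℕ} (hn : 3 ≤ n) :
    ⁅Wd ^ 3, Wx ^ 3⁆ (X ^ n) = (9 * n ^ 2 + 9 * n + 6 : ℂ) • X ^ n := by
  obtain ⟨m, rfl⟩ := Nat.exists_eq_add_of_le' hn
  rw [Ring.lie_def, LinearMap.sub_apply, Module.End.mul_apply, Module.End.mul_apply,
    Wx_pow_apply_X_pow, Wd_pow_apply_X_pow_add, Wd_pow_apply_X_pow_add, map_smul,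
    Wx_pow_apply_X_pow, ← sub_smul]
  congr 1
  simp only [Nat.descFactorial, Nat.reduceSubDiff, Nat.add_one_sub_one, tsub_zero, mul_one,
    Nat.cast_mul, Nat.cast_add, Nat.cast_ofNat, Nat.cast_one]
  ring

theorem linearIndependent_ad_pow_apply_Wx_pow_three :
    LinearIndependent ℂ fun k : ℕ =>
      (LieAlgebra.ad ℂ (Module.End ℂ ℂ[X]) ⁅Wd ^ 3, Wx ^ 3⁆ ^ k) (Wx ^ 3) := by
  rw [linearIndependent_powers_iff_aeval]
  intro p hp
  apply eq_zero_of_infinite_isRoot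
  refine Set.infinite_of_injective_forall_mem (f := fun n : ℕ => (54 * n + 270 : ℂ))
    (fun a b hab => by simpa using hab) fun m => ?_
  have hv := lie_Wd_pow_three_Wx_pow_three_apply_X_pow (Nat.le_add_left 3 m)
  have hAv := lie_Wd_pow_three_Wx_pow_three_apply_X_pow (Nat.le_add_left 3 (m + 3))
  rw [← Wx_pow_apply_X_pow] at hAv
  have hzero := congr($hp (X ^ (m + 3)))
  rw [aeval_ad_apply_of_eigenvector hv hAv, LinearMap.zero_apply, Wx_pow_apply_X_pow,
    smul_eq_zero] at hzero
  show p.eval _ = 0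
  convert hzero.resolve_right (pow_ne_zero _ X_ne_zero) using 2
  push_cast
  ring

/-- In the Weyl algebra `A₁`, the Lie subalgebra generated by `x³` and `∂³` is
infinite-dimensional over `ℂ`. -/
theorem stmt15 :
    ¬ Module.Finite ℂ
      ↥(LieSubalgebra.lieSpan ℂ (Module.End ℂ (Polynomial ℂ)) {Wx ^ 3, Wd ^ 3}) := by
  intro hfin
  set L := LieSubalgebra.lieSpan ℂ (Module.End ℂ (Polynomial ℂ)) {Wx ^ 3, Wd ^ 3}
  have hx : Wx ^ 3 ∈ L := LieSubalgebra.subset_lieSpan (by simp)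
  have hd : Wd ^ 3 ∈ L := LieSubalgebra.subset_lieSpan (by simp)
  have hmem := L.ad_pow_mem (L.lie_mem hd hx) hx
  exact Module.Finite.not_linearIndependent_of_infinite (fun k => (⟨_, hmem k⟩ : L))
    (.of_comp L.toSubmodule.subtype linearIndependent_ad_pow_apply_Wx_pow_three)
end

section
/- Let A be a commutative domain, n a positive integer, and u ∈ A[t]. In the algebra U(A, u, n), every element can be written as a finite sum Σ_{ℓ>0, k≥0} α_{k,ℓ} ỹ^ℓ ẽ^k + Σ_{m≥0, r≥0} β_{m,r} x̃^m ẽ^r with coefficients α_{k,ℓ}, β_{m,r} ∈ A; i.e., the monomials ỹ^ℓ ẽ^k (ℓ > 0) and x̃^m ẽ^r span U(A, u, n) over A. -/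
open Polynomial

/-! Right multiplication by each generator preserves the `A`-span of the monomials. Pushing
`ẽ^k` past `x̃` or `ỹ` turns it into `(ẽ ± n)^k`, again a polynomial in `ẽ`; what remains is a
product `ỹx̃ = u(ẽ + n)` or `x̃ỹ = u(ẽ)`, which lowers the power of `ỹ` or `x̃` by one and
contributes one more polynomial factor in `ẽ`. A submodule that contains `1` and is stable under
right multiplication by generators of the algebra is the whole algebra. -/

open Submodule

section

variable {A R : Type*} [CommRing A] [Ring R] [Algebra A R]

theorem Submodule.eq_top_of_one_mem_of_mul_generator_mem {s : Set R}
    (hs : Algebra.adjoin A s = ⊤) {S : Submodule A R} (h1 : 1 ∈ S)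
    (hmul : ∀ g ∈ s, ∀ z ∈ S, z * g ∈ S) : S = ⊤ := by
  refine eq_top_iff'.mpr fun a => ?_
  have ha : a ∈ Algebra.adjoin A s := hs ▸ Algebra.mem_top
  suffices ∀ z ∈ S, z * a ∈ S by simpa using this 1 h1
  induction ha using Algebra.adjoin_induction with
  | mem g hg => exact hmul g hg
  | algebraMap r =>
    intro z hz
    simpa [← Algebra.commutes, ← Algebra.smul_def] using S.smul_mem r hz
  | add a b _ _ ha hb => intro z hz; rw [mul_add]; exact S.add_mem (ha z hz) (hb z hz)
  | mul a b _ _ ha hb => intro z hz; rw [← mul_assoc]; exact hb _ (ha z hz)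

theorem Submodule.mul_mem_span_of_forall_mem {s : Set R} {g : R}
    (h : ∀ z ∈ s, z * g ∈ span A s) {z : R} (hz : z ∈ span A s) : z * g ∈ span A s :=
  (span_le (p := (span A s).comap (LinearMap.mulRight A g))).mpr h hz

theorem mul_aeval_mem_span_mul_pow (a e : R) (p : A[X]) :
    a * aeval e p ∈ span A (Set.range fun k : ℕ => a * e ^ k) := by
  rw [aeval_eq_sum_range, Finset.mul_sum]
  refine sum_mem fun i _ => ?_
  rw [mul_smul_comm]
  exact smul_mem _ _ (subset_span ⟨i, rfl⟩)

variable (A) in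
def monomialSpan (x y e : R) : Submodule A R :=
  span A ({z | ∃ ℓ > 0, ∃ k : ℕ, z = y ^ ℓ * e ^ k} ∪ {z | ∃ m r : ℕ, z = x ^ m * e ^ r})

theorem x_pow_mul_aeval_mem_monomialSpan (x y e : R) (m : ℕ) (p : A[X]) :
    x ^ m * aeval e p ∈ monomialSpan A x y e := by
  refine span_mono ?_ (mul_aeval_mem_span_mul_pow _ e p)
  rintro _ ⟨r, rfl⟩
  exact Or.inr ⟨m, r, rfl⟩

theorem y_pow_mul_aeval_mem_monomialSpan (x y e : R) (ℓ : ℕ) (p : A[X]) :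
    y ^ ℓ * aeval e p ∈ monomialSpan A x y e := by
  rcases ℓ.eq_zero_or_pos with rfl | hℓ
  · simpa using x_pow_mul_aeval_mem_monomialSpan x y e 0 p
  refine span_mono ?_ (mul_aeval_mem_span_mul_pow _ e p)
  rintro _ ⟨k, rfl⟩
  exact Or.inl ⟨ℓ, hℓ, k, rfl⟩

theorem pow_mul_eq_mul_aeval_of_mul_eq {e g : R} {q : A[X]} (h : e * g = g * aeval e q)
    (k : ℕ) : e ^ k * g = g * aeval e (q ^ k) := by
  rw [map_pow]
  exact ((show SemiconjBy g (aeval e q) e from h.symm).pow_right k).eq.symm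

theorem mul_e_mem_monomialSpan {x y e z : R} (hz : z ∈ monomialSpan A x y e) :
    z * e ∈ monomialSpan A x y e := by
  refine mul_mem_span_of_forall_mem ?_ hz
  have hpow (a : R) (k : ℕ) : a * e ^ k * e = a * aeval e (X ^ (k + 1) : A[X]) := by
    rw [map_pow, aeval_X, mul_assoc, ← pow_succ]
  rintro _ (⟨ℓ, -, k, rfl⟩ | ⟨m, r, rfl⟩)
  · rw [hpow]; exact y_pow_mul_aeval_mem_monomialSpan x y e ℓ _
  · rw [hpow]; exact x_pow_mul_aeval_mem_monomialSpan x y e m _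

theorem mul_x_mem_monomialSpan {u : A[X]} {c : A} {x y e z : R}
    (hex : e * x = x * (e + algebraMap A R c)) (hyx : y * x = aeval (e + algebraMap A R c) u)
    (hz : z ∈ monomialSpan A x y e) : z * x ∈ monomialSpan A x y e := by
  refine mul_mem_span_of_forall_mem ?_ hz
  have hshift : aeval e (X + C c) = e + algebraMap A R c := by simp
  have hpow := pow_mul_eq_mul_aeval_of_mul_eq (hshift ▸ hex)
  rintro _ (⟨ℓ, hℓ, k, rfl⟩ | ⟨m, r, rfl⟩)
  · obtain ⟨ℓ, rfl⟩ := Nat.exists_eq_add_one_of_ne_zero hℓ.ne'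
    have : y ^ (ℓ + 1) * e ^ k * x = y ^ ℓ * aeval e (u.comp (X + C c) * (X + C c) ^ k) := by
      rw [mul_assoc, hpow, pow_succ, mul_assoc, ← mul_assoc y, hyx, map_mul,
        aeval_comp, hshift]
    rw [this]; exact y_pow_mul_aeval_mem_monomialSpan x y e ℓ _
  · rw [mul_assoc, hpow, ← mul_assoc, ← pow_succ]
    exact x_pow_mul_aeval_mem_monomialSpan x y e (m + 1) _

theorem mul_y_mem_monomialSpan {u : A[X]} {c : A} {x y e z : R}
    (hey : e * y = y * (e - algebraMap A R c)) (hxy : x * y = aeval e u)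
    (hz : z ∈ monomialSpan A x y e) : z * y ∈ monomialSpan A x y e := by
  refine mul_mem_span_of_forall_mem ?_ hz
  have hshift : aeval e (X - C c) = e - algebraMap A R c := by simp
  have hpow := pow_mul_eq_mul_aeval_of_mul_eq (hshift ▸ hey)
  have hy (ℓ k : ℕ) : y ^ ℓ * e ^ k * y ∈ monomialSpan A x y e := by
    rw [mul_assoc, hpow, ← mul_assoc, ← pow_succ]
    exact y_pow_mul_aeval_mem_monomialSpan x y e (ℓ + 1) _
  rintro _ (⟨ℓ, -, k, rfl⟩ | ⟨_ | m, r, rfl⟩)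
  · exact hy ℓ k
  · rw [pow_zero, ← pow_zero y]; exact hy 0 r
  · rw [mul_assoc, hpow, pow_succ, mul_assoc, ← mul_assoc x, hxy, ← map_mul]
    exact x_pow_mul_aeval_mem_monomialSpan x y e m _

theorem monomialSpan_eq_top {u : A[X]} {c : A} {x y e : R} (hgen : Algebra.adjoin A {x, y, e} = ⊤)
    (hex : e * x = x * (e + algebraMap A R c)) (hey : e * y = y * (e - algebraMap A R c))
    (hxy : x * y = aeval e u) (hyx : y * x = aeval (e + algebraMap A R c) u) :
    monomialSpan A x y e = ⊤ := by
  refine eq_top_of_one_mem_of_mul_generator_mem hgen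
    (subset_span (Or.inr ⟨0, 0, by rw [pow_zero, pow_zero, one_mul]⟩)) ?_
  rintro g (rfl | rfl | rfl) z hz
  · exact mul_x_mem_monomialSpan hex hyx hz
  · exact mul_y_mem_monomialSpan hey hxy hz
  · exact mul_e_mem_monomialSpan hz

end

namespace UAlgebra

variable (A : Type*) [CommRing A] (u : A[X]) (n : ℕ)

local notation "x̃" => RingQuot.mkAlgHom A (URel A u n) (FreeAlgebra.ι A 0)
local notation "ỹ" => RingQuot.mkAlgHom A (URel A u n) (FreeAlgebra.ι A 1)
local notation "ẽ" => RingQuot.mkAlgHom A (URel A u n) (FreeAlgebra.ι A 2)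

theorem adjoin_generators_eq_top : Algebra.adjoin A {x̃, ỹ, ẽ} = ⊤ := by
  have hgens :
      {x̃, ỹ, ẽ} = RingQuot.mkAlgHom A (URel A u n) '' Set.range (FreeAlgebra.ι A) := by
    ext; simp [Fin.exists_fin_succ, eq_comm]
  rw [hgens, Algebra.adjoin_image, FreeAlgebra.adjoin_range_ι, Algebra.map_top,
    AlgHom.range_eq_top]
  exact RingQuot.mkAlgHom_surjective A _

theorem e_mul_x : ẽ * x̃ = x̃ * (ẽ + algebraMap A (UAlgebra A u n) n) := by
  have h := RingQuot.mkAlgHom_rel A (URel.ex (u := u) (n := n))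
  rw [map_mul, map_add, map_nsmul, map_mul] at h
  rw [h, map_natCast, mul_add, nsmul_eq_mul, Nat.cast_comm]

theorem e_mul_y : ẽ * ỹ = ỹ * (ẽ - algebraMap A (UAlgebra A u n) n) := by
  have h := RingQuot.mkAlgHom_rel A (URel.ey (u := u) (n := n))
  rw [map_mul, map_sub, map_nsmul, map_mul] at h
  rw [h, map_natCast, mul_sub, nsmul_eq_mul, Nat.cast_comm]

theorem x_mul_y : x̃ * ỹ = aeval ẽ u := by
  have h := RingQuot.mkAlgHom_rel A (URel.xy (u := u) (n := n))
  rwa [map_mul, ← aeval_def, ← aeval_algHom_apply] at h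

theorem y_mul_x : ỹ * x̃ = aeval (ẽ + algebraMap A (UAlgebra A u n) n) u := by
  have h := RingQuot.mkAlgHom_rel A (URel.yx (u := u) (n := n))
  rwa [map_mul, ← aeval_def, ← aeval_algHom_apply, map_add, map_natCast,
    ← map_natCast (algebraMap A _)] at h

end UAlgebra

theorem stmt18_general (A : Type*) [CommRing A] (n : ℕ)
    (u : Polynomial A) :
    let x := RingQuot.mkAlgHom A (URel A u n) (FreeAlgebra.ι A 0)
    let y := RingQuot.mkAlgHom A (URel A u n) (FreeAlgebra.ι A 1)
    let e := RingQuot.mkAlgHom A (URel A u n) (FreeAlgebra.ι A 2)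
    Submodule.span A
        ({z : UAlgebra A u n | ∃ ℓ > 0, ∃ k : ℕ, z = y ^ ℓ * e ^ k} ∪
         {z : UAlgebra A u n | ∃ m r : ℕ, z = x ^ m * e ^ r}) = ⊤ :=
  monomialSpan_eq_top (UAlgebra.adjoin_generators_eq_top A u n) (UAlgebra.e_mul_x A u n)
    (UAlgebra.e_mul_y A u n) (UAlgebra.x_mul_y A u n) (UAlgebra.y_mul_x A u n)

/-- In `U(A, u, n)`, the monomials `ỹ^ℓ ẽ^k` (`ℓ > 0`) and `x̃^m ẽ^r` span the whole
algebra over `A`. -/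
theorem stmt18 (A : Type*) [CommRing A] [IsDomain A] (n : ℕ) (hn : 0 < n)
    (u : Polynomial A) :
    let x := RingQuot.mkAlgHom A (URel A u n) (FreeAlgebra.ι A 0)
    let y := RingQuot.mkAlgHom A (URel A u n) (FreeAlgebra.ι A 1)
    let e := RingQuot.mkAlgHom A (URel A u n) (FreeAlgebra.ι A 2)
    Submodule.span A
        ({z : UAlgebra A u n | ∃ ℓ > 0, ∃ k : ℕ, z = y ^ ℓ * e ^ k} ∪
         {z : UAlgebra A u n | ∃ m r : ℕ, z = x ^ m * e ^ r}) = ⊤ :=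
  stmt18_general A n u
end
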